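/- arXiv:2504.17244 — 2 statements merged into one kernel-verified Lean document; each statement's English description precedes it below -/
import Mathlib

section
/- If n − i ≥ k, then the maximum of Σ_{j=1}^k λ_j over all achievable request vectors λ ∈ S_i(n,k) equals i + (n−i)/k; that is, every λ ∈ S_i(n,k) satisfies Σ_{j=1}^k λ_j ≤ i + (n−i)/k, and there exists λ ∈ S_i(n,k) attaining this sum with equality. -/
open Matrix

/-- `R ⊆ [n]` is a recovery set for object `j` under generator matrix `G`:
the standard basis vector `e_j` lies in the span of the columns of `G` indexed by `R`,
and minimally so. -/
def IsRecoverySet {F : Type*} [Field F] {k n : ℕ} (G : Matrix (Fin k) (Fin n) F)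
    (j : Fin k) (R : Finset (Fin n)) : Prop :=
  (Pi.single j 1 : Fin k → F) ∈ Submodule.span F (Gᵀ '' (R : Set (Fin n))) ∧
    ∀ S : Finset (Fin n), S ⊂ R →
      (Pi.single j 1 : Fin k → F) ∉ Submodule.span F (Gᵀ '' (S : Set (Fin n)))

/-- A valid allocation of request rates `lam` to recovery sets: nonnegative weights
`w j R` supported on recovery sets, summing to `lam j` for each object `j`, and
loading each server `l` by at most its unit capacity. -/
def IsValidAllocation {F : Type*} [Field F] {k n : ℕ} (G : Matrix (Fin k) (Fin n) F)
    (lam : Fin k → ℝ) (w : Fin k → Finset (Fin n) → ℝ) : Prop :=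
  (∀ j R, 0 ≤ w j R) ∧
  (∀ j R, ¬ IsRecoverySet G j R → w j R = 0) ∧
  (∀ j, ∑ R : Finset (Fin n), w j R = lam j) ∧
  (∀ l : Fin n, ∑ j : Fin k, ∑ R ∈ Finset.univ.filter (fun R : Finset (Fin n) => l ∈ R),
      w j R ≤ 1)

/-- The service rate region of `G`. -/
def ServiceRegion {F : Type*} [Field F] {k n : ℕ} (G : Matrix (Fin k) (Fin n) F) :
    Set (Fin k → ℝ) :=
  {lam | (∀ j, 0 ≤ lam j) ∧ ∃ w, IsValidAllocation G lam w}

/-- `Gmat M i` = the `k × n` matrix formed by the `i` leftmost (systematic) columns of `M`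
followed by the `n - i` rightmost (parity) columns of `M`. -/
def Gmat {F : Type*} [Field F] {k n : ℕ} (M : Matrix (Fin k) (Fin (k + n)) F) (i : ℕ) :
    Matrix (Fin k) (Fin n) F :=
  Matrix.of fun r l =>
    if (l : ℕ) < i then M r ⟨(l : ℕ), by have := l.isLt; omega⟩
    else M r ⟨k + (l : ℕ), by have := l.isLt; omega⟩

/-!
Upper bound, by LP duality: give every systematic server the dual weight `1` and every parity
server the weight `1/k`. A recovery set either contains a systematic server or, since any `k`
columns of `M` are independent and `e_j` is itself a column of `M`, at least `k` parity servers;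
either way it has dual weight at least `1`, so summing the server capacities bounds `∑ λ_j` by
the total dual weight `i + (n - i)/k`.

Achievability: object `j < i` is read from its own systematic server at rate `1`, and object `0`
from every `k`-subset of the `n - i ≥ k` parity servers at rate `1 / C(n-i-1, k-1)`. Each parity
server lies in exactly `C(n-i-1, k-1)` of these subsets, so it is loaded exactly to capacity, and
object `0` gets `C(n-i, k) / C(n-i-1, k-1) = (n - i)/k`.
-/

open Finset Module Submodule

section ServiceRegion

variable {F : Type*} [Field F] {k n : ℕ} {G : Matrix (Fin k) (Fin n) F}

theorem sum_le_of_mem_serviceRegion {lam : Fin k → ℝ} (hlam : lam ∈ ServiceRegion G)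
    (y : Fin n → ℝ) (hy0 : ∀ l, 0 ≤ y l)
    (hy : ∀ j R, IsRecoverySet G j R → 1 ≤ ∑ l ∈ R, y l) :
    ∑ j, lam j ≤ ∑ l, y l := by
  obtain ⟨-, w, hw0, hwrec, hwsum, hwcap⟩ := hlam
  have hweight : ∀ j R, w j R ≤ w j R * ∑ l ∈ R, y l := fun j R => by
    by_cases hR : IsRecoverySet G j R
    · exact le_mul_of_one_le_right (hw0 j R) (hy j R hR)
    · simp [hwrec j R hR]
  calc ∑ j, lam j = ∑ j, ∑ R, w j R := by simp only [hwsum]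
    _ ≤ ∑ j, ∑ R, w j R * ∑ l ∈ R, y l := by gcongr with j _ R; exact hweight j R
    _ = ∑ l, y l * ∑ j, ∑ R with l ∈ R, w j R := by
        simp only [mul_sum, sum_filter, mul_ite, mul_zero]
        refine Eq.trans ?_ sum_comm
        refine sum_congr rfl fun j _ => Eq.trans ?_ sum_comm
        refine sum_congr rfl fun R _ => ?_
        rw [← sum_filter, filter_mem_eq_inter, univ_inter]
        simp only [mul_comm]
    _ ≤ ∑ l, y l * 1 := by gcongr with l; exacts [hy0 l, hwcap l]
    _ = ∑ l, y l := by simp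

theorem exists_mem_serviceRegion_sum_eq {ι : Type*} (s : Finset ι) (obj : ι → Fin k)
    (srv : ι → Finset (Fin n)) (a : ι → ℝ) (ha : ∀ ρ ∈ s, 0 ≤ a ρ)
    (hrec : ∀ ρ ∈ s, IsRecoverySet G (obj ρ) (srv ρ))
    (hcap : ∀ l, ∑ ρ ∈ s with l ∈ srv ρ, a ρ ≤ 1) :
    ∃ lam ∈ ServiceRegion G, ∑ j, lam j = ∑ ρ ∈ s, a ρ := by
  set w : Fin k → Finset (Fin n) → ℝ := fun j R => ∑ ρ ∈ s with (obj ρ, srv ρ) = (j, R), a ρ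
  have hfiber : ∀ f : ι → ℝ,
      ∑ j, ∑ R, ∑ ρ ∈ s with (obj ρ, srv ρ) = (j, R), f ρ = ∑ ρ ∈ s, f ρ := fun f => by
    rw [← Fintype.sum_prod_type']
    exact sum_fiberwise s _ f
  refine ⟨fun j => ∑ R, w j R, ⟨fun j => ?_, w, fun j R => ?_, fun j R hR => ?_, fun j => rfl,
    fun l => ?_⟩, hfiber a⟩
  · exact sum_nonneg fun R _ => sum_nonneg fun ρ hρ => ha ρ (mem_filter.1 hρ).1
  · exact sum_nonneg fun ρ hρ => ha ρ (mem_filter.1 hρ).1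
  · refine sum_eq_zero fun ρ hρ => absurd ?_ hR
    obtain ⟨hρs, hρ⟩ := mem_filter.1 hρ
    obtain ⟨rfl, rfl⟩ := Prod.ext_iff.1 hρ
    exact hrec ρ hρs
  · calc ∑ j, ∑ R with l ∈ R, w j R
          = ∑ j, ∑ R, ∑ ρ ∈ s with (obj ρ, srv ρ) = (j, R),
              if l ∈ srv ρ then a ρ else 0 := by
          refine sum_congr rfl fun j _ => ?_
          rw [sum_filter]
          refine sum_congr rfl fun R _ => ?_
          have hsrv : ∀ ρ ∈ s.filter fun ρ => (obj ρ, srv ρ) = (j, R), srv ρ = R :=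
            fun ρ hρ => (Prod.ext_iff.1 (mem_filter.1 hρ).2).2
          split_ifs with hl
          · exact sum_congr rfl fun ρ hρ => by rw [hsrv ρ hρ, if_pos hl]
          · exact (sum_eq_zero fun ρ hρ => by rw [hsrv ρ hρ, if_neg hl]).symm
      _ ≤ 1 := by rw [hfiber, ← sum_filter]; exact hcap l

theorem isRecoverySet_singleton {j : Fin k} {l : Fin n} (hl : Gᵀ l = Pi.single j 1) :
    IsRecoverySet G j {l} := by
  refine ⟨?_, fun S hS => ?_⟩
  · exact subset_span ⟨l, mem_coe.2 (mem_singleton_self l), hl⟩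
  · rw [eq_empty_of_ssubset_singleton hS, coe_empty, Set.image_empty (f := Gᵀ), span_empty,
      mem_bot]
    exact Pi.single_ne_zero_iff.2 one_ne_zero

end ServiceRegion

section MDS

variable {F V ι : Type*} [Field F] [AddCommGroup V] [Module F V] {v : ι → V}

theorem linearIndepOn_of_card_le [Fintype ι]
    (hv : ∀ S : Finset ι, #S = finrank F V → LinearIndepOn F v S)
    (hι : finrank F V ≤ Fintype.card ι) {S : Finset ι} (hS : #S ≤ finrank F V) :
    LinearIndepOn F v S := by
  obtain ⟨T, hST, -, hT⟩ := exists_subsuperset_card_eq (subset_univ S) hS (by simpa using hι)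
  exact (hv T hT).mono (coe_subset.2 hST)

theorem notMem_span_image_of_card_lt [Fintype ι]
    (hv : ∀ S : Finset ι, #S = finrank F V → LinearIndepOn F v S)
    (hι : finrank F V ≤ Fintype.card ι) {S : Finset ι} (hS : #S < finrank F V) {c : ι}
    (hc : c ∉ S) : v c ∉ span F (v '' S) := by
  classical
  have hind : LinearIndepOn F v (insert c S : Finset ι) :=
    linearIndepOn_of_card_le hv hι (by rw [card_insert_of_notMem hc]; omega)
  rw [coe_insert] at hind
  exact hind.notMem_span_of_insert hc

theorem span_image_eq_top_of_card_eq [FiniteDimensional F V]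
    (hv : ∀ S : Finset ι, #S = finrank F V → LinearIndepOn F v S)
    {S : Finset ι} (hS : #S = finrank F V) : span F (v '' S) = ⊤ := by
  rw [Set.image_eq_range]
  exact (hv S hS).linearIndependent.span_eq_top_of_card_eq_finrank' (by simpa using hS)

end MDS

theorem sum_powersetCard_ite_mem {α M : Type*} [DecidableEq α] [AddCommMonoid M] {P : Finset α}
    {r : ℕ} (hr : 1 ≤ r) (a : α) (x : M) :
    ∑ R ∈ P.powersetCard r, (if a ∈ R then x else 0) =
      if a ∈ P then (#P - 1).choose (r - 1) • x else 0 := by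
  split_ifs with ha
  · rw [← sum_filter, sum_const]
    simpa using congrArg (· • x) (card_filter_powersetCard_subset {a} P r (by simpa) (by simpa))
  · exact sum_eq_zero fun R hR => if_neg fun haR => ha ((mem_powersetCard.1 hR).1 haR)

theorem Fin.sum_ite_eq_castLE {M : Type*} [AddCommMonoid M] {i n : ℕ} (h : i ≤ n) (l : Fin n)
    (x : M) :
    ∑ t : Fin i, (if l = Fin.castLE h t then x else 0) = if (l : ℕ) < i then x else 0 := by
  split_ifs with hl
  · rw [sum_eq_single_of_mem ⟨l, hl⟩ (mem_univ _) fun t _ ht => if_neg fun h' => ht ?_]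
    · exact if_pos (Fin.ext rfl)
    · exact Fin.ext (by simp [h'])
  · exact sum_eq_zero fun t _ => if_neg fun h' => hl (by simp [h'])

theorem choose_div_choose_pred {m r : ℕ} (hr : 1 ≤ r) (hrm : r ≤ m) :
    (m.choose r : ℝ) / (m - 1).choose (r - 1) = m / r := by
  obtain ⟨m, rfl⟩ := Nat.exists_eq_add_of_le' (hr.trans hrm)
  obtain ⟨r, rfl⟩ := Nat.exists_eq_add_of_le' hr
  have hpos : 0 < m.choose r := Nat.choose_pos (by omega)
  simp only [Nat.add_sub_cancel]
  rw [div_eq_div_iff (by positivity) (by positivity)]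
  exact_mod_cast (Nat.add_one_mul_choose_eq m r).symm

theorem Fin.card_filter_le_val {n i : ℕ} : #{l : Fin n | i ≤ (l : ℕ)} = n - i := by
  have h := card_filter_add_card_filter_not (s := (univ : Finset (Fin n)))
    (p := fun l : Fin n => (l : ℕ) < i)
  simp only [Fin.card_filter_val_lt, not_lt, card_univ, Fintype.card_fin] at h
  omega

section Gmat

variable {F : Type*} [Field F] {k n : ℕ}

def IsSystematic (M : Matrix (Fin k) (Fin (k + n)) F) : Prop :=
  ∀ j r : Fin k, M r (Fin.castAdd n j) = if r = j then 1 else 0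

def HasMDSColumns (M : Matrix (Fin k) (Fin (k + n)) F) : Prop :=
  ∀ S : Finset (Fin (k + n)), #S = k → LinearIndepOn F Mᵀ S

variable {M : Matrix (Fin k) (Fin (k + n)) F} {i : ℕ}

theorem Gmat_transpose_of_le (M : Matrix (Fin k) (Fin (k + n)) F) {l : Fin n} (hl : i ≤ l) :
    (Gmat M i)ᵀ l = Mᵀ (Fin.natAdd k l) := by
  ext r
  simp [Gmat, not_lt.2 hl, Fin.natAdd]

theorem Gmat_transpose_castLE (hsys : IsSystematic M) (hik : i ≤ k) (hin : i ≤ n) (t : Fin i) :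
    (Gmat M i)ᵀ (Fin.castLE hin t) = Pi.single (Fin.castLE hik t) 1 := by
  ext r
  simp only [Gmat, transpose_apply, of_apply, Fin.val_castLE, t.isLt, if_true, Pi.single_apply]
  exact hsys (Fin.castLE hik t) r

theorem image_Gmat_transpose_of_le (M : Matrix (Fin k) (Fin (k + n)) F) {R : Finset (Fin n)}
    (hR : ∀ l ∈ R, i ≤ l) :
    (Gmat M i)ᵀ '' R = Mᵀ '' (R.map (Fin.natAddEmb k) : Finset (Fin (k + n))) := by
  rw [coe_map]
  exact (Set.image_congr fun l hl => Gmat_transpose_of_le M (hR l hl)).trans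
    (Set.image_comp _ _ _)

theorem single_notMem_span_Gmat_transpose_image (hsys : IsSystematic M) (hMDS : HasMDSColumns M)
    {R : Finset (Fin n)} (hR : ∀ l ∈ R, i ≤ l) (hcard : #R < k) (j : Fin k) :
    Pi.single j 1 ∉ span F ((Gmat M i)ᵀ '' R) := by
  have hcol : Pi.single j 1 = Mᵀ (Fin.castAdd n j) := by
    ext r
    simp [hsys j r, Pi.single_apply]
  rw [image_Gmat_transpose_of_le M hR, hcol]
  refine notMem_span_image_of_card_lt (fun S hS => hMDS S (by simpa using hS)) (by simp)
    (by simpa using hcard) ?_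
  simp only [Finset.mem_map, Fin.natAddEmb_apply, not_exists, not_and]
  intro l _ h
  have hval : k + (l : ℕ) = j := congrArg Fin.val h
  have := j.isLt
  omega

theorem isRecoverySet_Gmat_of_card_eq (hsys : IsSystematic M) (hMDS : HasMDSColumns M)
    {R : Finset (Fin n)} (hR : ∀ l ∈ R, i ≤ l) (hcard : #R = k) (j : Fin k) :
    IsRecoverySet (Gmat M i) j R := by
  refine ⟨?_, fun S hS => single_notMem_span_Gmat_transpose_image hsys hMDS
    (fun l hl => hR l (hS.subset hl)) (hcard ▸ card_lt_card hS) j⟩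
  rw [image_Gmat_transpose_of_le M hR,
    span_image_eq_top_of_card_eq (fun S hS => hMDS S (by simpa using hS)) (by simpa using hcard)]
  exact mem_top

theorem exists_lt_or_le_card_of_isRecoverySet_Gmat (hsys : IsSystematic M)
    (hMDS : HasMDSColumns M) {j : Fin k} {R : Finset (Fin n)}
    (hrec : IsRecoverySet (Gmat M i) j R) : (∃ l ∈ R, (l : ℕ) < i) ∨ k ≤ #R := by
  by_contra! h
  exact single_notMem_span_Gmat_transpose_image hsys hMDS h.1 h.2 j hrec.1

theorem sum_le_of_mem_serviceRegion_Gmat (hk : 0 < k) (hsys : IsSystematic M)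
    (hMDS : HasMDSColumns M) (hin : i ≤ n) {lam : Fin k → ℝ}
    (hlam : lam ∈ ServiceRegion (Gmat M i)) :
    ∑ j, lam j ≤ i + (n - i) / k := by
  set y : Fin n → ℝ := fun l => if (l : ℕ) < i then 1 else (k : ℝ)⁻¹
  have hk' : (k : ℝ)⁻¹ ≤ 1 := inv_le_one_of_one_le₀ (by exact_mod_cast hk)
  have hy : ∀ l, (k : ℝ)⁻¹ ≤ y l := fun l => by
    by_cases hl : (l : ℕ) < i <;> simp [y, hl, hk']
  have hy0 : ∀ l, 0 ≤ y l := fun l => (by positivity : (0 : ℝ) ≤ (k : ℝ)⁻¹).trans (hy l)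
  refine (sum_le_of_mem_serviceRegion hlam y hy0 fun j R hR => ?_).trans_eq ?_
  · rcases exists_lt_or_le_card_of_isRecoverySet_Gmat hsys hMDS hR with ⟨l, hlR, hl⟩ | hcard
    · simpa [y, hl] using single_le_sum (fun l _ => hy0 l) hlR
    · calc (1 : ℝ) = k * (k : ℝ)⁻¹ := (mul_inv_cancel₀ (by positivity)).symm
        _ ≤ #R * (k : ℝ)⁻¹ := by gcongr
        _ = ∑ _l ∈ R, (k : ℝ)⁻¹ := by rw [sum_const, nsmul_eq_mul]
        _ ≤ ∑ l ∈ R, y l := sum_le_sum fun l _ => hy l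
  · rw [sum_ite, sum_const, sum_const, Fin.card_filter_val_lt, min_eq_right hin]
    simp only [not_lt, Fin.card_filter_le_val, nsmul_eq_mul, Nat.cast_sub hin, mul_one,
      div_eq_mul_inv]

theorem exists_mem_serviceRegion_Gmat_sum_eq (hk : 0 < k) (hsys : IsSystematic M)
    (hMDS : HasMDSColumns M) (hik : i ≤ k) (hni : k ≤ n - i) :
    ∃ lam ∈ ServiceRegion (Gmat M i), ∑ j, lam j = i + (n - i) / k := by
  have hin : i ≤ n := by omega
  set P : Finset (Fin n) := {l | i ≤ (l : ℕ)}
  have hP : #P = n - i := Fin.card_filter_le_val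
  set c : ℝ := (((n - i - 1).choose (k - 1) : ℕ) : ℝ)
  have hc : c ≠ 0 := by simp only [c]; exact_mod_cast (Nat.choose_pos (by omega)).ne'
  set s := (univ : Finset (Fin i)).disjSum (P.powersetCard k)
  set obj : Fin i ⊕ Finset (Fin n) → Fin k := Sum.elim (Fin.castLE hik) fun _ => ⟨0, hk⟩
  set srv : Fin i ⊕ Finset (Fin n) → Finset (Fin n) := Sum.elim (fun t => {Fin.castLE hin t}) id
  set a : Fin i ⊕ Finset (Fin n) → ℝ := Sum.elim (fun _ => 1) fun _ => c⁻¹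
  have ha : ∀ ρ ∈ s, 0 ≤ a ρ := by
    rintro (t | R) _ <;> simp only [a, Sum.elim_inl, Sum.elim_inr] <;> positivity
  have hrec : ∀ ρ ∈ s, IsRecoverySet (Gmat M i) (obj ρ) (srv ρ) := by
    rintro (t | R) hρ
    · exact isRecoverySet_singleton (Gmat_transpose_castLE hsys hik hin t)
    · obtain ⟨hRP, hR⟩ := mem_powersetCard.1 (inr_mem_disjSum.1 hρ)
      exact isRecoverySet_Gmat_of_card_eq hsys hMDS (fun l hl => (mem_filter.1 (hRP hl)).2) hR _
  have hcap : ∀ l, ∑ ρ ∈ s with l ∈ srv ρ, a ρ ≤ 1 := by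
    intro l
    rw [sum_filter, sum_disjSum]
    change (∑ t : Fin i, if l ∈ ({Fin.castLE hin t} : Finset (Fin n)) then 1 else 0) +
      ∑ R ∈ P.powersetCard k, (if l ∈ R then c⁻¹ else 0) ≤ 1
    simp only [mem_singleton, Fin.sum_ite_eq_castLE, sum_powersetCard_ite_mem hk, hP, P,
      mem_filter, mem_univ, true_and, nsmul_eq_mul]
    split_ifs <;> first | omega | simp [c, hc]
  obtain ⟨lam, hlam, hsum⟩ := exists_mem_serviceRegion_sum_eq s obj srv a ha hrec hcap
  refine ⟨lam, hlam, hsum.trans ?_⟩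
  rw [sum_disjSum]
  simp only [a, Sum.elim_inl, Sum.elim_inr, sum_const, card_univ, Fintype.card_fin,
    card_powersetCard, hP, nsmul_eq_mul, mul_one, ← div_eq_mul_inv, c,
    choose_div_choose_pred hk hni, Nat.cast_sub hin]

end Gmat

theorem maximal_matching_simplex_large_n_general
    {F : Type*} [Field F] {k n : ℕ} (hk : 2 ≤ k)
    (M : Matrix (Fin k) (Fin (k + n)) F)
    (hsys : ∀ j : Fin k, ∀ r : Fin k, M r (Fin.castAdd n j) = if r = j then (1 : F) else 0)
    (hMDS : ∀ S : Finset (Fin (k + n)), S.card = k →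
      LinearIndependent F (fun l : S => Mᵀ (l : Fin (k + n))))
    (i : ℕ) (hik : i ≤ k) (hni : k ≤ n - i) :
    (∀ lam ∈ ServiceRegion (Gmat M i),
        ∑ j, lam j ≤ (i : ℝ) + ((n : ℝ) - (i : ℝ)) / (k : ℝ)) ∧
      ∃ lam ∈ ServiceRegion (Gmat M i),
        ∑ j, lam j = (i : ℝ) + ((n : ℝ) - (i : ℝ)) / (k : ℝ) :=
  ⟨fun _ hlam => sum_le_of_mem_serviceRegion_Gmat (by omega) hsys hMDS (by omega) hlam,
    exists_mem_serviceRegion_Gmat_sum_eq (by omega) hsys hMDS hik hni⟩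

theorem maximal_matching_simplex_large_n
    {F : Type*} [Field F] [Fintype F] {k n : ℕ} (hk : 2 ≤ k) (hkn : k ≤ n)
    (hq : k + n + 1 ≤ Fintype.card F)
    (M : Matrix (Fin k) (Fin (k + n)) F)
    (hsys : ∀ j : Fin k, ∀ r : Fin k, M r (Fin.castAdd n j) = if r = j then (1 : F) else 0)
    (hMDS : ∀ S : Finset (Fin (k + n)), S.card = k →
      LinearIndependent F (fun l : S => Mᵀ (l : Fin (k + n))))
    (i : ℕ) (hik : i ≤ k) (hni : k ≤ n - i) :
    (∀ lam ∈ ServiceRegion (Gmat M i),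
        ∑ j, lam j ≤ (i : ℝ) + ((n : ℝ) - (i : ℝ)) / (k : ℝ)) ∧
      ∃ lam ∈ ServiceRegion (Gmat M i),
        ∑ j, lam j = (i : ℝ) + ((n : ℝ) - (i : ℝ)) / (k : ℝ) :=
  maximal_matching_simplex_large_n_general hk M hsys hMDS i hik hni
end

section
/- Necessity of the capacity constraints: for every achievable request vector λ ∈ S_i(n,k) and every subset A ⊆ [i], letting B = [i] \ A and C = {i+1,…,k}, it holds that k·(Σ_{j∈A} λ_j + Σ_{j∈C} λ_j) + Σ_{j∈B} λ_j ≤ n + |A|·(k−1). -/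
open Matrix

/-!
Let `X_j = ∑_R |R| λ_{j,R}` be the server capacity consumed by object `j`; adding up the
server constraints gives `∑_j X_j ≤ n`. By the MDS property a set of fewer than `k` columns
spans `e_j` only if it contains `e_j` itself, so the only recovery set of size `< k` is the
systematic singleton `{j}`, which exists only for `j < i`. Hence `X_j ≥ k λ_j` for `j ≥ i`,
`X_j ≥ λ_j` for every `j`, and `X_j ≥ k λ_j - (k - 1)` for `j < i`, because the singleton
carries weight at most `1`. Summing these bounds over `A`, `B` and `C` gives the inequality.
-/

theorem notMem_span_image_of_card_lt_s10 {F V ι : Type*} [Field F] [AddCommGroup V] [Module F V]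
    [Fintype ι] {k : ℕ} {v : ι → V}
    (hv : ∀ S : Finset ι, S.card = k → LinearIndependent F (fun l : S => v l))
    (hk : k ≤ Fintype.card ι) {T : Finset ι} {c : ι} (hc : c ∉ T) (hT : T.card < k) :
    v c ∉ Submodule.span F (v '' T) := by
  classical
  obtain ⟨S, hTS, hS⟩ := Finset.exists_superset_card_eq (s := insert c T)
    ((Finset.card_insert_le c T).trans hT) hk
  have hind : LinearIndepOn F v (insert c (T : Set ι)) :=
    LinearIndepOn.mono (hv S hS) (by rw [← Finset.coe_insert]; exact Finset.coe_subset.2 hTS)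
  exact ((linearIndepOn_insert (by simpa using hc)).1 hind).2

namespace IsRecoverySet

variable {F : Type*} [Field F] {k n : ℕ} {G : Matrix (Fin k) (Fin n) F} {j : Fin k}
  {R : Finset (Fin n)}

theorem nonempty (hR : IsRecoverySet G j R) : R.Nonempty := by
  rw [Finset.nonempty_iff_ne_empty]
  rintro rfl
  have h := hR.1
  rw [Finset.coe_empty, show (Gᵀ '' ∅ : Set (Fin k → F)) = ∅ from Set.image_empty _,
    Submodule.span_empty, Submodule.mem_bot] at h
  simp at h

theorem eq_of_subset (hR : IsRecoverySet G j R) {S : Finset (Fin n)} (hSR : S ⊆ R)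
    (hS : (Pi.single j 1 : Fin k → F) ∈ Submodule.span F (Gᵀ '' (S : Set (Fin n)))) : S = R := by
  by_contra hne
  exact hR.2 S (Finset.ssubset_iff_subset_ne.2 ⟨hSR, hne⟩) hS

end IsRecoverySet

def objectLoad {k n : ℕ} (w : Fin k → Finset (Fin n) → ℝ) (j : Fin k) : ℝ :=
  ∑ R : Finset (Fin n), (R.card : ℝ) * w j R

namespace IsValidAllocation

variable {F : Type*} [Field F] {k n : ℕ} {G : Matrix (Fin k) (Fin n) F} {lam : Fin k → ℝ}
  {w : Fin k → Finset (Fin n) → ℝ}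

theorem sum_objectLoad_le (hw : IsValidAllocation G lam w) : ∑ j, objectLoad w j ≤ n := by
  have hserver : ∀ j, objectLoad w j = ∑ l : Fin n, ∑ R with l ∈ R, w j R := by
    intro j
    simp_rw [Finset.sum_filter]
    rw [Finset.sum_comm]
    simp [objectLoad, Finset.sum_ite_mem]
  calc ∑ j, objectLoad w j = ∑ l : Fin n, ∑ j, ∑ R with l ∈ R, w j R := by
        simp_rw [hserver]; exact Finset.sum_comm
    _ ≤ ∑ _l : Fin n, (1 : ℝ) := Finset.sum_le_sum fun l _ => hw.2.2.2 l
    _ = n := by simp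

theorem weight_le_one (hw : IsValidAllocation G lam w) (j : Fin k) {R : Finset (Fin n)}
    {l : Fin n} (hl : l ∈ R) : w j R ≤ 1 := by
  calc w j R ≤ ∑ R with l ∈ R, w j R :=
        Finset.single_le_sum (fun R _ => hw.1 j R) (by simpa using hl)
    _ ≤ ∑ j', ∑ R with l ∈ R, w j' R :=
        Finset.single_le_sum (f := fun j' => ∑ R with l ∈ R, w j' R)
          (fun j' _ => Finset.sum_nonneg fun R _ => hw.1 j' R) (Finset.mem_univ j)
    _ ≤ 1 := hw.2.2.2 l

theorem weight_eq_zero_or_isRecoverySet (hw : IsValidAllocation G lam w) (j : Fin k)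
    (R : Finset (Fin n)) : w j R = 0 ∨ IsRecoverySet G j R :=
  or_iff_not_imp_right.2 (hw.2.1 j R)

theorem natCast_mul_le_objectLoad (hw : IsValidAllocation G lam w) {j : Fin k} {m : ℕ}
    (hm : ∀ R, IsRecoverySet G j R → m ≤ R.card) : m * lam j ≤ objectLoad w j := by
  rw [← hw.2.2.1 j, Finset.mul_sum]
  refine Finset.sum_le_sum fun R _ => ?_
  rcases hw.weight_eq_zero_or_isRecoverySet j R with hzero | hR
  · simp [hzero]
  · exact mul_le_mul_of_nonneg_right (by exact_mod_cast hm R hR) (hw.1 j R)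

theorem mul_sub_le_objectLoad (hw : IsValidAllocation G lam w) {j : Fin k} {m : ℕ} (hm : 1 ≤ m)
    {l : Fin n} (hml : ∀ R, IsRecoverySet G j R → R ≠ {l} → m ≤ R.card) :
    m * lam j - (m - 1) ≤ objectLoad w j := by
  -- weight on the singleton `{l}` costs one server instead of `m`
  have hpointwise : ∀ R, m * w j R - (if R = {l} then (m - 1) * w j R else 0)
      ≤ (R.card : ℝ) * w j R := by
    intro R
    split_ifs with hRl
    · rw [hRl, Finset.card_singleton, Nat.cast_one]; linarith
    rcases hw.weight_eq_zero_or_isRecoverySet j R with hzero | hR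
    · simp [hzero]
    · simpa using mul_le_mul_of_nonneg_right (by exact_mod_cast hml R hR hRl) (hw.1 j R)
  have hsum := Finset.sum_le_sum fun R (_ : R ∈ Finset.univ) => hpointwise R
  rw [Finset.sum_sub_distrib, ← Finset.mul_sum, hw.2.2.1 j, Finset.sum_ite_eq',
    if_pos (Finset.mem_univ _)] at hsum
  have hm' : (0 : ℝ) ≤ m - 1 := sub_nonneg.2 (by exact_mod_cast hm)
  calc m * lam j - (m - 1) ≤ m * lam j - (m - 1) * w j {l} :=
        sub_le_sub_left (mul_le_of_le_one_right hm'
          (hw.weight_le_one j (Finset.mem_singleton_self l))) _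
    _ ≤ objectLoad w j := hsum

end IsValidAllocation

def gmatColumn (k i : ℕ) {n : ℕ} (l : Fin n) : Fin (k + n) :=
  if (l : ℕ) < i then ⟨l, by omega⟩ else ⟨k + l, by omega⟩

section Gmat

variable {F : Type*} [Field F] {k n : ℕ} {M : Matrix (Fin k) (Fin (k + n)) F} {i : ℕ}

theorem Gmat_transpose_apply (l : Fin n) : (Gmat M i)ᵀ l = Mᵀ (gmatColumn k i l) := by
  funext r
  simp only [Gmat, gmatColumn, transpose_apply, of_apply]
  split_ifs <;> rfl

theorem gmatColumn_eq_castAdd_iff {l : Fin n} {j : Fin k} :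
    gmatColumn k i l = Fin.castAdd n j ↔ (l : ℕ) < i ∧ (l : ℕ) = j := by
  unfold gmatColumn
  split_ifs <;> simp [Fin.ext_iff] <;> omega

theorem transpose_castAdd_eq_single
    (hsys : ∀ j : Fin k, ∀ r : Fin k, M r (Fin.castAdd n j) = if r = j then (1 : F) else 0)
    (j : Fin k) : Mᵀ (Fin.castAdd n j) = Pi.single j 1 := by
  funext r
  simp [hsys j r, Pi.single_apply]

theorem IsRecoverySet.Gmat_eq_singleton_of_card_lt (hkn : k ≤ n)
    (hsys : ∀ j : Fin k, ∀ r : Fin k, M r (Fin.castAdd n j) = if r = j then (1 : F) else 0)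
    (hMDS : ∀ S : Finset (Fin (k + n)), S.card = k →
      LinearIndependent F (fun l : S => Mᵀ (l : Fin (k + n))))
    {j : Fin k} {R : Finset (Fin n)} (hR : IsRecoverySet (Gmat M i) j R) (hcard : R.card < k) :
    (j : ℕ) < i ∧ R = {Fin.castLE hkn j} := by
  classical
  have hcols : (Gmat M i)ᵀ '' (R : Set (Fin n))
      = (fun c => Mᵀ c) '' (R.image (gmatColumn k i) : Set (Fin (k + n))) := by
    rw [Finset.coe_image, Set.image_image]
    exact Set.image_congr fun l _ => Gmat_transpose_apply l
  -- by MDS, `e_j` is spanned by fewer than `k` columns only if it is one of them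
  obtain ⟨l, hlR, hlj⟩ : ∃ l ∈ R, gmatColumn k i l = Fin.castAdd n j := by
    rw [← Finset.mem_image]
    by_contra hnot
    have hspan := hR.1
    rw [hcols, ← transpose_castAdd_eq_single hsys] at hspan
    exact notMem_span_image_of_card_lt_s10 hMDS (by simp) hnot
      (Finset.card_image_le.trans_lt hcard) hspan
  obtain ⟨hli, hl⟩ := gmatColumn_eq_castAdd_iff.1 hlj
  obtain rfl : l = Fin.castLE hkn j := Fin.ext hl
  refine ⟨hl ▸ hli, (hR.eq_of_subset (Finset.singleton_subset_iff.2 hlR) ?_).symm⟩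
  refine Submodule.subset_span ⟨Fin.castLE hkn j, by simp, ?_⟩
  rw [Gmat_transpose_apply, hlj, transpose_castAdd_eq_single hsys]

end Gmat

theorem srr_capacity_constraints_necessary_general
    {F : Type*} [Field F] {k n : ℕ} (hkn : k ≤ n)
    (M : Matrix (Fin k) (Fin (k + n)) F)
    (hsys : ∀ j : Fin k, ∀ r : Fin k, M r (Fin.castAdd n j) = if r = j then (1 : F) else 0)
    (hMDS : ∀ S : Finset (Fin (k + n)), S.card = k →
      LinearIndependent F (fun l : S => Mᵀ (l : Fin (k + n))))
    (i : ℕ)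
    (lam : Fin k → ℝ) (hlam : lam ∈ ServiceRegion (Gmat M i : Matrix (Fin k) (Fin n) F))
    (A : Finset (Fin k)) (hA : ∀ j ∈ A, (j : ℕ) < i) :
    (k : ℝ) * ((∑ j ∈ A, lam j) +
        ∑ j ∈ Finset.univ.filter (fun j : Fin k => i ≤ (j : ℕ)), lam j) +
      ∑ j ∈ Finset.univ.filter (fun j : Fin k => (j : ℕ) < i ∧ j ∉ A), lam j
      ≤ (n : ℝ) + (A.card : ℝ) * ((k : ℝ) - 1) := by
  obtain ⟨-, w, hw⟩ := hlam
  have hsmall : ∀ j R, IsRecoverySet (Gmat M i) j R → R.card < k →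
      (j : ℕ) < i ∧ R = {Fin.castLE hkn j} :=
    fun j R hR => hR.Gmat_eq_singleton_of_card_lt hkn hsys hMDS
  have hbound : ∀ j : Fin k,
      k * ((if j ∈ A then lam j else 0) + if i ≤ (j : ℕ) then lam j else 0)
        + (if (j : ℕ) < i ∧ j ∉ A then lam j else 0)
      ≤ objectLoad w j + if j ∈ A then (k - 1 : ℝ) else 0 := by
    intro j
    by_cases hjA : j ∈ A
    · have := hw.mul_sub_le_objectLoad j.pos fun R hR hne =>
        not_lt.1 fun hlt => hne (hsmall j R hR hlt).2
      simpa [hjA, (hA j hjA).not_ge] using this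
    by_cases hji : (j : ℕ) < i
    · have := hw.natCast_mul_le_objectLoad (j := j) (m := 1) fun R hR => hR.nonempty.card_pos
      simpa [hjA, hji, hji.not_ge] using this
    · have := hw.natCast_mul_le_objectLoad fun R hR =>
        not_lt.1 fun hlt => hji (hsmall j R hR hlt).1
      simpa [hjA, hji, not_lt.1 hji] using this
  have hsum := Finset.sum_le_sum fun j (_ : j ∈ Finset.univ) => hbound j
  simp only [Finset.sum_add_distrib, ← Finset.mul_sum, Finset.sum_ite_mem, Finset.univ_inter,
    ← Finset.sum_filter, Finset.sum_const, nsmul_eq_mul] at hsum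
  linarith [hw.sum_objectLoad_le]

theorem srr_capacity_constraints_necessary
    {F : Type*} [Field F] [Fintype F] {k n : ℕ} (hk : 2 ≤ k) (hkn : k ≤ n)
    (hq : k + n + 1 ≤ Fintype.card F)
    (M : Matrix (Fin k) (Fin (k + n)) F)
    (hsys : ∀ j : Fin k, ∀ r : Fin k, M r (Fin.castAdd n j) = if r = j then (1 : F) else 0)
    (hMDS : ∀ S : Finset (Fin (k + n)), S.card = k →
      LinearIndependent F (fun l : S => Mᵀ (l : Fin (k + n))))
    (i : ℕ) (hik : i ≤ k)
    (lam : Fin k → ℝ) (hlam : lam ∈ ServiceRegion (Gmat M i : Matrix (Fin k) (Fin n) F))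
    (A : Finset (Fin k)) (hA : ∀ j ∈ A, (j : ℕ) < i) :
    (k : ℝ) * ((∑ j ∈ A, lam j) +
        ∑ j ∈ Finset.univ.filter (fun j : Fin k => i ≤ (j : ℕ)), lam j) +
      ∑ j ∈ Finset.univ.filter (fun j : Fin k => (j : ℕ) < i ∧ j ∉ A), lam j
      ≤ (n : ℝ) + (A.card : ℝ) * ((k : ℝ) - 1) :=
  srr_capacity_constraints_necessary_general hkn M hsys hMDS i lam hlam A hA
end
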